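/- Let k ∈ ℝ and define f : ℝ → ℝ by f(x) = exp(∫₀ˣ (k - erf(y)) dy), where erf(y) = (2/√π) ∫₀^y e^{-t²} dt. Then: (i) f is differentiable with f'(x) = (k - erf(x)) f(x) for all x ∈ ℝ, so that -i f'(x) + i (k - erf(x)) f(x) = 0 for all x (the spinor (f, 0) is a zero mode of the error-function Dirac fiber operator); and (ii) if -1 < k < 1 then f is square-integrable on ℝ. -/

import Mathlib

open MeasureTheory

/-- The Gauss error function `erf y = (2/√π) ∫₀^y e^{-t²} dt`. -/
noncomputable def erf (y : ℝ) : ℝ :=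
  2 / Real.sqrt Real.pi * ∫ t in (0:ℝ)..y, Real.exp (-t^2)

/-!
The exponent `2 ∫₀ˣ (k - erf)` of `f²` has derivative `2 (k - erf x)`, which tends to
`2 (k ∓ 1)` at `±∞`. For `|k| < 1` these limits have the signs that, by the mean value theorem,
make `f²` dominated by a decaying exponential at each end of the line.
-/

open Filter Real Topology Asymptotics Set

theorem continuous_erf : Continuous erf :=
  continuous_const.mul <| intervalIntegral.continuous_primitive
    (fun _ _ => (by fun_prop : Continuous fun t : ℝ => exp (-t ^ 2)).intervalIntegrable _ _) 0

theorem erf_neg (y : ℝ) : erf (-y) = -erf y := by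
  have h := intervalIntegral.integral_comp_neg (a := 0) (b := y) fun t : ℝ => exp (-t ^ 2)
  simp only [neg_sq, neg_zero] at h
  rw [erf, erf, intervalIntegral.integral_symm, ← h, mul_neg]

theorem tendsto_erf_atTop : Tendsto erf atTop (𝓝 1) := by
  have hint : IntegrableOn (fun t : ℝ => exp (-t ^ 2)) (Ioi 0) := by
    simpa using (integrable_exp_neg_mul_sq one_pos).integrableOn (s := Ioi (0:ℝ))
  have hgauss : ∫ t in Ioi (0:ℝ), exp (-t ^ 2) = √π / 2 := by
    simpa using integral_gaussian_Ioi 1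
  have hlim := (intervalIntegral_tendsto_integral_Ioi 0 hint tendsto_id).const_mul (2 / √π)
  rwa [hgauss, div_mul_div_cancel₀ (sqrt_pos.2 pi_pos).ne', div_self two_ne_zero] at hlim

theorem tendsto_erf_atBot : Tendsto erf atBot (𝓝 (-1)) := by
  have h := (tendsto_erf_atTop.comp tendsto_neg_atBot_atTop).neg
  simpa [Function.comp_def, erf_neg] using h

section ExpOfDerivBound

variable {G g : ℝ → ℝ}

theorem isBigO_atTop_exp_of_hasDerivAt (hG : ∀ x, HasDerivAt G (g x) x) {c : ℝ}
    (hg : ∀ᶠ x in atTop, g x ≤ c) :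
    (fun x => exp (G x)) =O[atTop] fun x => exp (c * x) := by
  obtain ⟨B, hB⟩ := eventually_atTop.1 hg
  have hdiff : Differentiable ℝ G := fun x => (hG x).differentiableAt
  have hslope : ∀ x, B ≤ x → G x - G B ≤ c * (x - B) := fun x hx =>
    (convex_Ici B).image_sub_le_mul_sub_of_deriv_le hdiff.continuous.continuousOn
      hdiff.differentiableOn
      (fun y hy => by rw [(hG y).deriv]; exact hB y (interior_subset hy : y ∈ _))
      B self_mem_Ici x hx hx
  refine IsBigO.of_bound (exp (G B - c * B)) ?_
  filter_upwards [eventually_ge_atTop B] with x hx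
  simp only [norm_eq_abs, abs_exp, ← exp_add]
  exact exp_le_exp.2 (by linarith [hslope x hx])

theorem isBigO_atBot_exp_of_hasDerivAt (hG : ∀ x, HasDerivAt G (g x) x) {c : ℝ}
    (hg : ∀ᶠ x in atBot, c ≤ g x) :
    (fun x => exp (G x)) =O[atBot] fun x => exp (c * x) := by
  obtain ⟨B, hB⟩ := eventually_atBot.1 hg
  have hdiff : Differentiable ℝ G := fun x => (hG x).differentiableAt
  have hslope : ∀ x, x ≤ B → c * (B - x) ≤ G B - G x := fun x hx =>
    (convex_Iic B).mul_sub_le_image_sub_of_le_deriv hdiff.continuous.continuousOn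
      hdiff.differentiableOn
      (fun y hy => by rw [(hG y).deriv]; exact hB y (interior_subset hy : y ∈ _))
      x hx B self_mem_Iic hx
  refine IsBigO.of_bound (exp (G B - c * B)) ?_
  filter_upwards [eventually_le_atBot B] with x hx
  simp only [norm_eq_abs, abs_exp, ← exp_add]
  exact exp_le_exp.2 (by linarith [hslope x hx])

theorem integrable_exp_of_hasDerivAt (hG : ∀ x, HasDerivAt G (g x) x) {l₁ l₂ : ℝ}
    (hbot : Tendsto g atBot (𝓝 l₁)) (hl₁ : 0 < l₁)
    (htop : Tendsto g atTop (𝓝 l₂)) (hl₂ : l₂ < 0) : Integrable fun x => exp (G x) := by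
  have hcont : Continuous fun x => exp (G x) :=
    continuous_exp.comp <| continuous_iff_continuousAt.2 fun x => (hG x).continuousAt
  exact hcont.locallyIntegrable.integrable_of_isBigO_atBot_atTop
    (isBigO_atBot_exp_of_hasDerivAt hG (hbot.eventually (eventually_ge_nhds (half_lt_self hl₁))))
    ⟨Iic 0, Iic_mem_atBot 0, integrableOn_exp_mul_Iic (half_pos hl₁) 0⟩
    (isBigO_atTop_exp_of_hasDerivAt hG (htop.eventually (eventually_le_nhds (by linarith))))
    ⟨Ioi 0, Ioi_mem_atTop 0, integrableOn_exp_mul_Ioi (by linarith : l₂ / 2 < 0) 0⟩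

end ExpOfDerivBound

theorem stmt13 (k : ℝ) (f : ℝ → ℝ)
    (hf : f = fun x => Real.exp (∫ y in (0:ℝ)..x, (k - erf y))) :
    (Differentiable ℝ f ∧ ∀ x : ℝ, deriv f x = (k - erf x) * f x) ∧
    (∀ x : ℝ, -Complex.I * Complex.ofReal (deriv f x) +
        Complex.I * Complex.ofReal (k - erf x) * Complex.ofReal (f x) = 0) ∧
    (-1 < k → k < 1 → MemLp f 2 volume) := by
  have hF : ∀ x, HasDerivAt (fun x => ∫ y in (0:ℝ)..x, (k - erf y)) (k - erf x) x := fun x =>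
    ((continuous_const.sub continuous_erf).integral_hasStrictDerivAt 0 x).hasDerivAt
  have hf' : ∀ x, HasDerivAt f ((k - erf x) * f x) x := fun x => by
    subst hf
    simpa [mul_comm] using (hF x).exp
  have hdiff : Differentiable ℝ f := fun x => (hf' x).differentiableAt
  have hderiv : ∀ x, deriv f x = (k - erf x) * f x := fun x => (hf' x).deriv
  refine ⟨⟨hdiff, hderiv⟩, fun x => ?_, fun hk₁ hk₂ => ?_⟩
  · rw [hderiv]
    push_cast
    ring
  · have hsq : (fun x => f x ^ 2) = fun x => exp (2 * ∫ y in (0:ℝ)..x, (k - erf y)) := by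
      ext x
      rw [hf, ← exp_nat_mul]
      norm_num
    rw [memLp_two_iff_integrable_sq hdiff.continuous.aestronglyMeasurable, hsq]
    exact integrable_exp_of_hasDerivAt (fun x => (hF x).const_mul 2)
      ((tendsto_erf_atBot.const_sub k).const_mul 2) (by linarith)
      ((tendsto_erf_atTop.const_sub k).const_mul 2) (by linarith)
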